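/- arXiv:2405.02758 — 2 statements merged into one kernel-verified Lean document; each statement's English description precedes it below -/
import Mathlib

section
/- Let K be a number field and V a one-dimensional K ⊗ ℚ_ℓ-module. For every ℤ_ℓ-order O in K ⊗ ℚ_ℓ, there exists a ℤ_ℓ-lattice T ⊂ V whose stabilizer order {x ∈ K ⊗ ℚ_ℓ : xT ⊆ T} is exactly O. -/
/-!
Fix a generator `e` of the free rank-one module `V` and take `T = O • e`. Since `a ↦ a • e` is a
bijection `A → V`, the `ℤ_ℓ`-lattice properties of `O` transfer to `T`, and since `1 ∈ O`, an
element `x` stabilizing `T` satisfies `x • e ∈ O • e`, i.e. `x ∈ O`.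
-/

open scoped TensorProduct

noncomputable section

/-- The structure map `ℤ_ℓ → K ⊗ ℚ_ℓ` (realized as `ℚ_ℓ ⊗[ℚ] K`). -/
def zellToAlg (ℓ : ℕ) [Fact ℓ.Prime] (K : Type*) [Field K] [Algebra ℚ K] :
    ℤ_[ℓ] →+* (ℚ_[ℓ] ⊗[ℚ] K) :=
  (algebraMap ℚ_[ℓ] (ℚ_[ℓ] ⊗[ℚ] K)).comp PadicInt.Coe.ringHom

theorem Module.Basis.bijective_smul_default {ι R M : Type*} [Unique ι] [Semiring R]
    [AddCommMonoid M] [Module R M] (b : Module.Basis ι R M) :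
    Function.Bijective (· • b default : R → M) := by
  refine ⟨fun r s h => ?_, fun v => ⟨b.repr v default, ?_⟩⟩
  · simpa using congrArg (b.repr · default) h
  · simpa [Finsupp.linearCombination_unique] using b.linearCombination_repr v

namespace AddSubgroup

variable {A V : Type*} [Ring A] [AddCommGroup V] [Module A V]

def smulSingleton (S : AddSubgroup A) (e : V) : AddSubgroup V :=
  S.map (LinearMap.toSpanSingleton A V e).toAddMonoidHom

variable {S : AddSubgroup A} {e : V}

@[simp]
theorem mem_smulSingleton {v : V} : v ∈ S.smulSingleton e ↔ ∃ a ∈ S, a • e = v := by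
  simp [smulSingleton]

theorem smul_mem_smulSingleton {a : A} (ha : ∀ x ∈ S, a * x ∈ S) {v : V}
    (hv : v ∈ S.smulSingleton e) : a • v ∈ S.smulSingleton e := by
  obtain ⟨x, hx, rfl⟩ := mem_smulSingleton.1 hv
  exact mem_smulSingleton.2 ⟨a * x, ha x hx, mul_smul a x e⟩

theorem exists_sum_smul_of_mem_smulSingleton {R : Type*} (φ : R → A) {m : ℕ} {f : Fin m → A}
    (hf : ∀ x ∈ S, ∃ c : Fin m → R, x = ∑ i, φ (c i) * f i) {v : V}
    (hv : v ∈ S.smulSingleton e) : ∃ c : Fin m → R, v = ∑ i, φ (c i) • f i • e := by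
  obtain ⟨x, hx, rfl⟩ := mem_smulSingleton.1 hv
  obtain ⟨c, rfl⟩ := hf x hx
  exact ⟨c, by simp only [Finset.sum_smul, mul_smul]⟩

theorem exists_smul_mem_smulSingleton {R : Type*} [Zero R] (φ : R → A)
    (he : Function.Surjective (· • e : A → V))
    (hS : ∀ y : A, ∃ c : R, c ≠ 0 ∧ φ c * y ∈ S) (v : V) :
    ∃ c : R, c ≠ 0 ∧ φ c • v ∈ S.smulSingleton e := by
  obtain ⟨y, rfl⟩ := he v
  obtain ⟨c, hc, hcy⟩ := hS y
  exact ⟨c, hc, mem_smulSingleton.2 ⟨φ c * y, hcy, mul_smul _ _ _⟩⟩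

end AddSubgroup

theorem Subring.forall_smul_mem_smulSingleton_iff {A V : Type*} [Ring A] [AddCommGroup V] [Module A V]
    (O : Subring A) {e : V} (he : Function.Injective (· • e : A → V)) (x : A) :
    (∀ t ∈ O.toAddSubgroup.smulSingleton e, x • t ∈ O.toAddSubgroup.smulSingleton e) ↔ x ∈ O := by
  refine ⟨fun h => ?_, fun hx t => AddSubgroup.smul_mem_smulSingleton fun y => O.mul_mem hx⟩
  obtain ⟨y, hy, hye⟩ := AddSubgroup.mem_smulSingleton.1
    (h e (AddSubgroup.mem_smulSingleton.2 ⟨1, O.one_mem, one_smul A e⟩))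
  exact he hye ▸ hy

/-- Let `K` be a number field and `V` a one-dimensional module over
`A := K ⊗ ℚ_ℓ`.  For every `ℤ_ℓ`-order `O` in `A` (a subring stable under `ℤ_ℓ`,
finitely generated as a `ℤ_ℓ`-module, and spanning `A` over `ℚ_ℓ`) there exists a
`ℤ_ℓ`-lattice `T ⊂ V` (a `ℤ_ℓ`-stable, finitely generated, full-rank additive
subgroup) whose stabilizer order `{x ∈ A : x T ⊆ T}` is exactly `O`. -/
theorem stmt_8 (ℓ : ℕ) [Fact ℓ.Prime] (K : Type*) [Field K] [NumberField K]
    (V : Type*) [AddCommGroup V] [Module (ℚ_[ℓ] ⊗[ℚ] K) V]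
    (bV : Module.Basis (Fin 1) (ℚ_[ℓ] ⊗[ℚ] K) V)
    (O : Subring (ℚ_[ℓ] ⊗[ℚ] K))
    (hOstable : ∀ (c : ℤ_[ℓ]), ∀ x ∈ O, zellToAlg ℓ K c * x ∈ O)
    (hOfg : ∃ (m : ℕ) (f : Fin m → ℚ_[ℓ] ⊗[ℚ] K), (∀ i, f i ∈ O) ∧
      ∀ x ∈ O, ∃ c : Fin m → ℤ_[ℓ], x = ∑ i, zellToAlg ℓ K (c i) * f i)
    (hOfull : ∀ x : ℚ_[ℓ] ⊗[ℚ] K, ∃ c : ℤ_[ℓ], c ≠ 0 ∧ zellToAlg ℓ K c * x ∈ O) :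
    ∃ T : AddSubgroup V,
      (∀ (c : ℤ_[ℓ]), ∀ t ∈ T, zellToAlg ℓ K c • t ∈ T) ∧
      (∃ (m : ℕ) (f : Fin m → V), (∀ i, f i ∈ T) ∧
        ∀ t ∈ T, ∃ c : Fin m → ℤ_[ℓ], t = ∑ i, zellToAlg ℓ K (c i) • f i) ∧
      (∀ x : V, ∃ c : ℤ_[ℓ], c ≠ 0 ∧ zellToAlg ℓ K c • x ∈ T) ∧
      (∀ x : ℚ_[ℓ] ⊗[ℚ] K, (∀ t ∈ T, x • t ∈ T) ↔ x ∈ O) := by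
  have he := bV.bijective_smul_default
  obtain ⟨m, f, hfO, hf⟩ := hOfg
  refine ⟨O.toAddSubgroup.smulSingleton (bV default), fun c t => ?_, ⟨m, fun i => f i • bV default,
    fun i => AddSubgroup.mem_smulSingleton.2 ⟨f i, hfO i, rfl⟩, fun t => ?_⟩,
    AddSubgroup.exists_smul_mem_smulSingleton _ he.2 hOfull, O.forall_smul_mem_smulSingleton_iff he.1⟩
  · exact AddSubgroup.smul_mem_smulSingleton (hOstable c)
  · exact AddSubgroup.exists_sum_smul_of_mem_smulSingleton _ hf
end
end

section
/- Let K be a CM number field of degree 2g with maximal totally real subfield K⁺, let R be an order in K stable under complex conjugation, and R⁺ = R ∩ K⁺. The norm map N : Cl(R) → Cl⁺(R⁺) on ideal classes of invertible fractional ideals, induced by I ↦ I·Ī, is a well-defined group homomorphism into the narrow class group of R⁺. -/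
noncomputable section

variable {K : Type*} [Field K] [CharZero K]

/-- The fixed field `K⁺` of the complex conjugation `σ` of a CM field `K`
(the maximal totally real subfield). -/
def fixedSubfield (σ : K ≃ₐ[ℚ] K) : Subfield K where
  carrier := {x | σ x = x}
  mul_mem' := fun ha hb => by
    simp only [Set.mem_setOf_eq] at *; rw [map_mul, ha, hb]
  one_mem' := map_one σ
  add_mem' := fun ha hb => by
    simp only [Set.mem_setOf_eq] at *; rw [map_add, ha, hb]
  zero_mem' := map_zero σ
  neg_mem' := fun ha => by
    simp only [Set.mem_setOf_eq] at *; rw [map_neg, ha]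
  inv_mem' := fun a ha => by
    simp only [Set.mem_setOf_eq] at *; rw [map_inv₀, ha]

/-- The order `R⁺ = R ∩ K⁺` of the totally real subfield `K⁺`. -/
def orderPlus (σ : K ≃ₐ[ℚ] K) (R : Subalgebra ℤ K) :
    Subalgebra ℤ ↥(fixedSubfield σ) where
  carrier := {x | (x : K) ∈ R}
  mul_mem' := fun ha hb => R.mul_mem ha hb
  one_mem' := R.one_mem
  add_mem' := fun ha hb => R.add_mem ha hb
  zero_mem' := R.zero_mem
  algebraMap_mem' := fun n => by
    have h : ((algebraMap ℤ ↥(fixedSubfield σ) n : ↥(fixedSubfield σ)) : K) = (n : K) := by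
      simp [algebraMap_int_eq, map_intCast]
    show ((algebraMap ℤ ↥(fixedSubfield σ) n : ↥(fixedSubfield σ)) : K) ∈ R
    rw [h]
    exact intCast_mem R n

/-- The conjugate `Ī` of a fractional `R`-ideal `I`: the `R`-module generated by
`σ(I)` (which equals `σ(I)` setwise when `R` is stable under `σ`). -/
def conjIdeal (σ : K ≃ₐ[ℚ] K) (R : Subalgebra ℤ K) (I : Submodule R K) :
    Submodule R K :=
  Submodule.span R (σ '' (I : Set K))

/-- The restriction `J ∩ K⁺` of a fractional `R`-ideal `J` to the totally real
subfield, as a module over `R⁺`. -/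
def restrictPlus (σ : K ≃ₐ[ℚ] K) (R : Subalgebra ℤ K) (J : Submodule R K) :
    Submodule (orderPlus σ R) ↥(fixedSubfield σ) where
  carrier := {x | (x : K) ∈ J}
  add_mem' := fun ha hb => J.add_mem ha hb
  zero_mem' := J.zero_mem
  smul_mem' := fun c x hx =>
    J.smul_mem ⟨((c : ↥(fixedSubfield σ)) : K), c.2⟩ hx

noncomputable instance (R : Subalgebra ℤ K) : CommGroup (Submodule R K)ˣ :=
  { (inferInstance : Group (Submodule R K)ˣ) with
    mul_comm := fun a b =>
      Units.ext (mul_comm (a : Submodule R K) (b : Submodule R K)) }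

noncomputable instance (σ : K ≃ₐ[ℚ] K) (R : Subalgebra ℤ K) :
    CommGroup (Submodule (orderPlus σ R) ↥(fixedSubfield σ))ˣ :=
  { (inferInstance : Group (Submodule (orderPlus σ R) ↥(fixedSubfield σ))ˣ) with
    mul_comm := fun a b => Units.ext
      (mul_comm (a : Submodule (orderPlus σ R) ↥(fixedSubfield σ))
        (b : Submodule (orderPlus σ R) ↥(fixedSubfield σ))) }

/-- The subgroup of principal invertible fractional ideals; the quotient by it is the
class group `Cl(R)`. -/
def principalSubgroup (R : Subalgebra ℤ K) : Subgroup (Submodule R K)ˣ :=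
  Subgroup.closure {u | ∃ x : K, x ≠ 0 ∧ (u : Submodule R K) = Submodule.span R {x}}

/-- The subgroup of totally positive principal invertible fractional ideals of the
totally real field `K⁺`; the quotient by it is the narrow class group `Cl⁺(R⁺)`. -/
def narrowPrincipalSubgroup (σ : K ≃ₐ[ℚ] K) (R : Subalgebra ℤ K) :
    Subgroup (Submodule (orderPlus σ R) ↥(fixedSubfield σ))ˣ :=
  Subgroup.closure {u | ∃ x : ↥(fixedSubfield σ),
    (∀ φ : ↥(fixedSubfield σ) →+* ℝ, 0 < φ x) ∧
    (u : Submodule (orderPlus σ R) ↥(fixedSubfield σ)) =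
      Submodule.span (orderPlus σ R) {x}}

/-
The conjugate-norm `I Ī ∩ K⁺` of an invertible ideal is invertible because `I` is locally
principal: over a maximal ideal `m` of `R⁺` there are only finitely many maximal ideals of the
finite extension `R`, so there are `a ∈ I`, `b ∈ I⁻¹` with `ab ≡ 1` modulo `mR`; then
`(a ā)(b b̄) ∈ (I Ī ∩ K⁺)(I⁻¹ Ī⁻¹ ∩ K⁺)` lies in `R⁺` and is `≡ 1` modulo `m`. Invertibility
makes `I ↦ I Ī ∩ K⁺` multiplicative, and it sends `(x)` to `(x x̄)`, which is totally positive
because `φ(x x̄) = |ψ(x)|²` for any extension `ψ` of a real embedding `φ` of `K⁺`.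
-/

theorem Ideal.exists_sub_one_mem_and_mem_of_isMaximal {A : Type*} [CommRing A]
    {t : Finset (Ideal A)} (ht : ∀ M ∈ t, M.IsMaximal) {M : Ideal A} (hM : M ∈ t) :
    ∃ e : A, e - 1 ∈ M ∧ ∀ N ∈ t.erase M, e ∈ N := by
  have htop : M ⊔ ⨅ N ∈ t.erase M, N = ⊤ := Ideal.sup_iInf_eq_top fun N hN =>
    (ht M hM).coprime_of_ne (ht N (Finset.mem_of_mem_erase hN)) (Finset.ne_of_mem_erase hN).symm
  obtain ⟨m, hm, e, he, hme⟩ := Submodule.mem_sup.mp (htop ▸ Submodule.mem_top (x := 1))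
  refine ⟨e, ?_, fun N hN => Ideal.mem_iInf.mp (Ideal.mem_iInf.mp he N) hN⟩
  rw [← hme, sub_add_cancel_right]
  exact M.neg_mem hm

theorem Submodule.exists_mul_notMem_of_mul_eq_one {A L : Type*} [CommRing A] [CommRing L]
    [Algebra A L] [FaithfulSMul A L] {I J : Submodule A L} (hIJ : I * J = 1) {M : Ideal A}
    (hM : M ≠ ⊤) : ∃ a ∈ I, ∃ b ∈ J, ∀ c, algebraMap A L c = a * b → c ∉ M := by
  by_contra! h
  have hle : I * J ≤ Submodule.map (Algebra.linearMap A L) M := Submodule.mul_le.mpr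
    fun a ha b hb => by
      obtain ⟨c, hc, hcM⟩ := h a ha b hb
      exact ⟨c, hcM, hc⟩
  obtain ⟨c, hc, hc1⟩ := hle (hIJ ▸ Submodule.one_le.mp le_rfl)
  rw [Algebra.linearMap_apply, ← map_one (algebraMap A L),
    (FaithfulSMul.algebraMap_injective A L).eq_iff] at hc1
  exact hM ((Ideal.eq_top_iff_one M).mpr (hc1 ▸ hc))

/- For each of the finitely many maximal `M ⊇ 𝔞` pick `aₘ ∈ I`, `bₘ ∈ J` with `aₘ bₘ ∉ M`.
Gluing the `bₘ` by the Chinese remainder theorem gives one `b ∈ J` for which the ideal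
`(I b) ∩ A` lies in none of these `M`, hence is coprime to `𝔞`. -/
theorem Submodule.exists_mul_eq_algebraMap_one_add_of_mul_eq_one {A L : Type*} [CommRing A]
    [CommRing L] [Algebra A L] [FaithfulSMul A L] {𝔞 : Ideal A}
    (h𝔞 : {M : Ideal A | M.IsMaximal ∧ 𝔞 ≤ M}.Finite) {I J : Submodule A L}
    (hIJ : I * J = 1) : ∃ a ∈ I, ∃ b ∈ J, ∃ r ∈ 𝔞, a * b = algebraMap A L (1 + r) := by
  classical
  set t := h𝔞.toFinset
  have ht : ∀ {M}, M ∈ t ↔ M.IsMaximal ∧ 𝔞 ≤ M := h𝔞.mem_toFinset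
  have hprod : ∀ a ∈ I, ∀ b ∈ J, ∃ c : A, algebraMap A L c = a * b := fun a ha b hb => by
    simpa [hIJ, Submodule.mem_one] using Submodule.mul_mem_mul ha hb
  choose! d hd using hprod
  choose! a ha b hb hab using fun M (hM : M ∈ t) =>
    Submodule.exists_mul_notMem_of_mul_eq_one hIJ (ht.mp hM).1.ne_top
  choose! e he1 he using fun M (hM : M ∈ t) =>
    Ideal.exists_sub_one_mem_and_mem_of_isMaximal (fun N hN => (ht.mp hN).1) hM
  set v := ∑ M ∈ t, e M • b M
  have hv : v ∈ J := J.sum_mem fun M hM => J.smul_mem _ (hb M hM)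
  have hx : ∀ N ∈ t, a N * v = algebraMap A L (∑ M ∈ t, e M * d (a N) (b M)) := by
    intro N hN
    rw [Finset.mul_sum, map_sum]
    refine Finset.sum_congr rfl fun M hM => ?_
    rw [mul_smul_comm, map_mul, hd _ (ha N hN) _ (hb M hM), Algebra.smul_def]
  have hxN : ∀ N ∈ t, ∑ M ∈ t, e M * d (a N) (b M) ∉ N := by
    intro N hN hmem
    rw [← Finset.add_sum_erase t _ hN, Submodule.add_mem_iff_left _
      (N.sum_mem fun M hM => N.mul_mem_right _ (he M (Finset.mem_of_mem_erase hM) N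
        (Finset.mem_erase.mpr ⟨(Finset.ne_of_mem_erase hM).symm, hN⟩)))] at hmem
    have : d (a N) (b N) = e N * d (a N) (b N) - (e N - 1) * d (a N) (b N) := by ring
    exact hab N hN _ (hd _ (ha N hN) _ (hb N hN))
      (this ▸ N.sub_mem hmem (N.mul_mem_right _ (he1 N hN)))
  set 𝔟 : Ideal A := Submodule.comap (Algebra.linearMap A L) (I * Submodule.span A {v})
  have h𝔟 : 𝔟 ⊔ 𝔞 = ⊤ := by
    by_contra h
    obtain ⟨N, hNmax, hN⟩ := Ideal.exists_le_maximal _ h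
    have hNt : N ∈ t := ht.mpr ⟨hNmax, le_sup_right.trans hN⟩
    refine hxN N hNt (le_sup_left.trans hN ?_)
    show algebraMap A L _ ∈ I * Submodule.span A {v}
    rw [← hx N hNt]
    exact Submodule.mul_mem_mul (ha N hNt) (Submodule.mem_span_singleton_self v)
  obtain ⟨j, hj, r, hr, hjr⟩ := Submodule.mem_sup.mp (h𝔟 ▸ Submodule.mem_top (x := (1 : A)))
  obtain ⟨z, hz, hzv⟩ := Submodule.mem_mul_span_singleton.mp hj
  refine ⟨z, hz, v, hv, -r, 𝔞.neg_mem hr, ?_⟩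
  rw [hzv, ← hjr, add_neg_cancel_right]
  rfl

section Conjugation

variable {σ : K ≃ₐ[ℚ] K} {R : Subalgebra ℤ K}

theorem apply_mem_conjIdeal (I : Submodule R K) {x : K} (hx : x ∈ I) :
    σ x ∈ conjIdeal σ R I :=
  Submodule.subset_span ⟨x, hx, rfl⟩

theorem apply_smul_of_stable (hRstable : ∀ x ∈ R, σ x ∈ R) (r : R) (x : K) :
    σ (r • x) = (⟨σ r, hRstable _ r.2⟩ : R) • σ x := by
  simp only [Subalgebra.smul_def, smul_eq_mul, map_mul]

theorem apply_mem_of_mem_conjIdeal (hσinv : ∀ x, σ (σ x) = x)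
    (hRstable : ∀ x ∈ R, σ x ∈ R) (I : Submodule R K) {x : K}
    (hx : x ∈ conjIdeal σ R I) : σ x ∈ I := by
  induction hx using Submodule.span_induction with
  | mem x hx => obtain ⟨y, hy, rfl⟩ := hx; rwa [hσinv]
  | zero => simp
  | add x y _ _ hx hy => rw [map_add]; exact I.add_mem hx hy
  | smul r x _ hx => rw [apply_smul_of_stable hRstable]; exact I.smul_mem _ hx

theorem mem_conjIdeal_iff (hσinv : ∀ x, σ (σ x) = x)
    (hRstable : ∀ x ∈ R, σ x ∈ R) (I : Submodule R K) {x : K} :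
    x ∈ conjIdeal σ R I ↔ σ x ∈ I :=
  ⟨apply_mem_of_mem_conjIdeal hσinv hRstable I,
    fun h => hσinv x ▸ apply_mem_conjIdeal I h⟩

theorem conjIdeal_mul (hσinv : ∀ x, σ (σ x) = x) (hRstable : ∀ x ∈ R, σ x ∈ R)
    (I J : Submodule R K) :
    conjIdeal σ R (I * J) = conjIdeal σ R I * conjIdeal σ R J := by
  refine le_antisymm (Submodule.span_le.mpr ?_) (Submodule.mul_le.mpr fun x hx y hy => ?_)
  · rintro _ ⟨z, hz, rfl⟩
    refine Submodule.mul_induction_on hz (fun x hx y hy => ?_) fun x y hx hy => ?_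
    · rw [map_mul]
      exact Submodule.mul_mem_mul (apply_mem_conjIdeal I hx) (apply_mem_conjIdeal J hy)
    · rw [map_add]; exact Submodule.add_mem _ hx hy
  · rw [mem_conjIdeal_iff hσinv hRstable, map_mul]
    exact Submodule.mul_mem_mul (apply_mem_of_mem_conjIdeal hσinv hRstable I hx)
      (apply_mem_of_mem_conjIdeal hσinv hRstable J hy)

theorem conjIdeal_one (hσinv : ∀ x, σ (σ x) = x) (hRstable : ∀ x ∈ R, σ x ∈ R) :
    conjIdeal σ R 1 = 1 := by
  ext x
  rw [mem_conjIdeal_iff hσinv hRstable, Submodule.mem_one, Submodule.mem_one]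
  exact ⟨fun ⟨r, hr⟩ => ⟨⟨σ r, hRstable _ r.2⟩, by rw [← hσinv x, ← hr]; rfl⟩,
    fun ⟨r, hr⟩ => ⟨⟨σ r, hRstable _ r.2⟩, by simp [← hr]⟩⟩

theorem conjIdeal_span_singleton (hRstable : ∀ x ∈ R, σ x ∈ R) (x : K) :
    conjIdeal σ R (Submodule.span R {x}) = Submodule.span R {σ x} := by
  refine le_antisymm (Submodule.span_le.mpr ?_) (Submodule.span_le.mpr ?_)
  · rintro _ ⟨y, hy, rfl⟩
    obtain ⟨r, rfl⟩ := Submodule.mem_span_singleton.mp hy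
    rw [apply_smul_of_stable hRstable]
    exact Submodule.smul_mem _ _ (Submodule.mem_span_singleton_self _)
  · rintro _ rfl
    exact apply_mem_conjIdeal _ (Submodule.mem_span_singleton_self x)

def normIdeal (hσinv : ∀ x, σ (σ x) = x) (hRstable : ∀ x ∈ R, σ x ∈ R) :
    Submodule R K →* Submodule R K where
  toFun I := I * conjIdeal σ R I
  map_one' := by rw [conjIdeal_one hσinv hRstable, mul_one]
  map_mul' I J := by rw [conjIdeal_mul hσinv hRstable]; ring

end Conjugation

section Restriction

variable {σ : K ≃ₐ[ℚ] K} {R : Subalgebra ℤ K}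

theorem mem_restrictPlus {J : Submodule R K} {x : fixedSubfield σ} :
    x ∈ restrictPlus σ R J ↔ (x : K) ∈ J := Iff.rfl

theorem restrictPlus_one : restrictPlus σ R 1 = 1 := by
  ext x
  rw [mem_restrictPlus, Submodule.mem_one, Submodule.mem_one]
  exact ⟨fun ⟨r, hr⟩ => ⟨⟨x, show (x : K) ∈ R from hr ▸ r.2⟩, rfl⟩,
    fun ⟨r, hr⟩ => ⟨⟨x, by rw [← hr]; exact r.2⟩, rfl⟩⟩

theorem restrictPlus_mul_le (X Y : Submodule R K) :
    restrictPlus σ R X * restrictPlus σ R Y ≤ restrictPlus σ R (X * Y) :=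
  Submodule.mul_le.mpr fun _ ha _ hb => Submodule.mul_mem_mul ha hb

theorem restrictPlus_mul_of_mul_eq_one {X X' Y Y' : Submodule R K} (hX : X * X' = 1)
    (hY : Y * Y' = 1) (hX' : restrictPlus σ R X * restrictPlus σ R X' = 1)
    (hY' : restrictPlus σ R Y * restrictPlus σ R Y' = 1) :
    restrictPlus σ R (X * Y) = restrictPlus σ R X * restrictPlus σ R Y := by
  refine le_antisymm ?_ (restrictPlus_mul_le X Y)
  have hinv : restrictPlus σ R (X * Y) * (restrictPlus σ R X' * restrictPlus σ R Y') ≤ 1 :=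
    calc _ ≤ restrictPlus σ R (X * Y) * restrictPlus σ R (X' * Y') :=
          mul_le_mul_right (restrictPlus_mul_le X' Y') _
      _ ≤ restrictPlus σ R (X * Y * (X' * Y')) := restrictPlus_mul_le _ _
      _ = 1 := by rw [mul_mul_mul_comm, hX, hY, mul_one, restrictPlus_one]
  calc restrictPlus σ R (X * Y)
      = restrictPlus σ R (X * Y) * (restrictPlus σ R X' * restrictPlus σ R Y') *
          (restrictPlus σ R X * restrictPlus σ R Y) := by
        rw [mul_assoc, mul_mul_mul_comm (restrictPlus σ R X'), mul_comm (restrictPlus σ R X'),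
          mul_comm (restrictPlus σ R Y'), hX', hY', mul_one, mul_one]
    _ ≤ restrictPlus σ R X * restrictPlus σ R Y := by
        grw [hinv, one_mul]

theorem mul_apply_mem_fixedSubfield (hσinv : ∀ x, σ (σ x) = x) (x : K) :
    x * σ x ∈ fixedSubfield σ := by
  show σ (x * σ x) = x * σ x
  rw [map_mul, hσinv, mul_comm]

theorem restrictPlus_span_mul_apply (hσinv : ∀ x, σ (σ x) = x) {x : K} (hx : x ≠ 0) :
    restrictPlus σ R (Submodule.span R {x * σ x}) =
      Submodule.span (orderPlus σ R) {⟨x * σ x, mul_apply_mem_fixedSubfield hσinv x⟩} := by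
  have hxσx : x * σ x ≠ 0 := mul_ne_zero hx (by simpa using hx)
  refine le_antisymm (fun z hz => ?_) (Submodule.span_le.mpr ?_)
  · obtain ⟨r, hr⟩ := Submodule.mem_span_singleton.mp (mem_restrictPlus.mp hz)
    rw [Subalgebra.smul_def, smul_eq_mul] at hr
    have hr_fixed : (r : K) ∈ fixedSubfield σ := by
      show σ r = r
      rw [eq_div_of_mul_eq hxσx hr, map_div₀, z.2, mul_apply_mem_fixedSubfield hσinv x]
    exact Submodule.mem_span_singleton.mpr ⟨⟨⟨r, hr_fixed⟩, r.2⟩, Subtype.ext hr⟩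
  · rintro _ rfl
    exact Submodule.mem_span_singleton_self (x * σ x)

end Restriction

section OrderPlus

variable {σ : K ≃ₐ[ℚ] K} {R : Subalgebra ℤ K}

instance (σ : K ≃ₐ[ℚ] K) (R : Subalgebra ℤ K) : Algebra (orderPlus σ R) R :=
  RingHom.toAlgebra
    { toFun x := ⟨x.1.1, x.2⟩
      map_one' := rfl
      map_mul' _ _ := rfl
      map_zero' := rfl
      map_add' _ _ := rfl }

instance : FaithfulSMul (orderPlus σ R) R :=
  (faithfulSMul_iff_algebraMap_injective _ _).mpr fun _ _ h =>
    Subtype.ext (Subtype.ext (congrArg (fun r : R => (r : K)) h))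

theorem moduleFinite_orderPlus (σ : K ≃ₐ[ℚ] K) (hRfg : Module.Finite ℤ R) :
    Module.Finite (orderPlus σ R) R :=
  Module.Finite.of_restrictScalars_finite ℤ _ _

theorem map_algebraMap_orderPlus_ne_top (hRfg : Module.Finite ℤ R) {m : Ideal (orderPlus σ R)}
    (hm : m ≠ ⊤) : m.map (algebraMap (orderPlus σ R) R) ≠ ⊤ := by
  have := moduleFinite_orderPlus σ hRfg
  rw [Ne, Ideal.map_eq_top_iff _ (FaithfulSMul.algebraMap_injective _ _)
    (algebraMap_isIntegral_iff.mpr inferInstance)]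
  exact hm

theorem finite_setOf_isMaximal_map_le (hRfg : Module.Finite ℤ R) {m : Ideal (orderPlus σ R)}
    (hm : m.IsMaximal) :
    {M : Ideal R | M.IsMaximal ∧ m.map (algebraMap (orderPlus σ R) R) ≤ M}.Finite := by
  have := moduleFinite_orderPlus σ hRfg
  refine (Algebra.QuasiFinite.finite_primesOver (S := R) m).subset fun M ⟨hM, hmM⟩ =>
    ⟨hM.isPrime, ⟨?_⟩⟩
  exact hm.eq_of_le (Ideal.comap_ne_top _ hM.ne_top) (Ideal.map_le_iff_le_comap.mp hmM)

def conjOrder (hRstable : ∀ x ∈ R, σ x ∈ R) : R →+* R where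
  toFun r := ⟨σ r, hRstable _ r.2⟩
  map_one' := by ext; simp
  map_mul' _ _ := by ext; simp
  map_zero' := by ext; simp
  map_add' _ _ := by ext; simp

theorem conjOrder_mem_map {m : Ideal (orderPlus σ R)} (hRstable : ∀ x ∈ R, σ x ∈ R) {r : R}
    (hr : r ∈ m.map (algebraMap (orderPlus σ R) R)) :
    conjOrder hRstable r ∈ m.map (algebraMap (orderPlus σ R) R) := by
  have hfix : (conjOrder hRstable).comp (algebraMap (orderPlus σ R) R) =
      algebraMap (orderPlus σ R) R :=
    RingHom.ext fun x => Subtype.ext (x : fixedSubfield σ).2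
  rw [← hfix, ← Ideal.map_map]
  exact Ideal.mem_map_of_mem _ hr

end OrderPlus

theorem Subfield.exists_ringHom_complex_extend [NumberField K] (F : Subfield K) (φ : F →+* ℂ) :
    ∃ ψ : K →+* ℂ, ∀ y : F, ψ y = φ y := by
  let : Algebra F ℂ := φ.toAlgebra
  have : Module.Finite F K := Module.Finite.of_restrictScalars_finite ℚ F K
  have : Algebra.IsAlgebraic F K := Algebra.IsAlgebraic.of_finite F K
  let ψ : K →ₐ[F] ℂ := IsAlgClosed.lift
  exact ⟨ψ, ψ.commutes⟩

theorem pos_apply_mul_apply [NumberField K] {σ : K ≃ₐ[ℚ] K} (hσinv : ∀ x, σ (σ x) = x)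
    (hconj : ∀ (ψ : K →+* ℂ) (x : K), ψ (σ x) = starRingEnd ℂ (ψ x)) {x : K} (hx : x ≠ 0)
    (φ : fixedSubfield σ →+* ℝ) :
    0 < φ ⟨x * σ x, mul_apply_mem_fixedSubfield hσinv x⟩ := by
  obtain ⟨ψ, hψ⟩ := (fixedSubfield σ).exists_ringHom_complex_extend (Complex.ofRealHom.comp φ)
  set ξ : fixedSubfield σ := ⟨x * σ x, mul_apply_mem_fixedSubfield hσinv x⟩
  have hnormSq : (φ ξ : ℂ) = Complex.normSq (ψ x) := by
    rw [← Complex.ofRealHom_eq_coe, ← RingHom.comp_apply, ← hψ, map_mul,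
      hconj, Complex.mul_conj]
  rw [Complex.ofReal_inj.mp hnormSq]
  exact Complex.normSq_pos.mpr ((map_ne_zero ψ).mpr hx)

section Norm

variable {σ : K ≃ₐ[ℚ] K} {R : Subalgebra ℤ K}

theorem restrictPlus_normIdeal_mul_eq_one (hσinv : ∀ x, σ (σ x) = x)
    (hRstable : ∀ x ∈ R, σ x ∈ R) (hRfg : Module.Finite ℤ R) {I I' : Submodule R K}
    (hII' : I * I' = 1) :
    restrictPlus σ R (normIdeal hσinv hRstable I) *
      restrictPlus σ R (normIdeal hσinv hRstable I') = 1 := by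
  set B := restrictPlus σ R (normIdeal hσinv hRstable I)
  set B' := restrictPlus σ R (normIdeal hσinv hRstable I')
  refine le_antisymm ?_ (Submodule.one_le.mpr ?_)
  · calc B * B' ≤ restrictPlus σ R (normIdeal hσinv hRstable I * normIdeal hσinv hRstable I') :=
          restrictPlus_mul_le _ _
      _ = 1 := by rw [← map_mul, hII', map_one, restrictPlus_one]
  by_contra h1
  set 𝔡 : Ideal (orderPlus σ R) := Submodule.comap (Algebra.linearMap _ _) (B * B')
  obtain ⟨m, hm, h𝔡m⟩ := Ideal.exists_le_maximal 𝔡 fun h =>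
    h1 (by simpa [𝔡] using (h ▸ Submodule.mem_top : (1 : orderPlus σ R) ∈ 𝔡))
  obtain ⟨a, ha, b, hb, r, hr, hab⟩ :=
    Submodule.exists_mul_eq_algebraMap_one_add_of_mul_eq_one
      (finite_setOf_isMaximal_map_le hRfg hm) hII'
  set c : R := 1 + r
  set τ := conjOrder hRstable
  -- `c τ(c) = (a σa) (b σb)` lies in `B B' ∩ R⁺ ⊆ m`, yet `c ≡ 1` modulo `m R`.
  let ω : orderPlus σ R := ⟨⟨c * σ c, mul_apply_mem_fixedSubfield hσinv c⟩, (c * τ c).2⟩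
  have hω : ω ∈ 𝔡 := by
    have hmem : (⟨a * σ a, mul_apply_mem_fixedSubfield hσinv a⟩ : fixedSubfield σ) *
        ⟨b * σ b, mul_apply_mem_fixedSubfield hσinv b⟩ ∈ B * B' :=
      Submodule.mul_mem_mul (Submodule.mul_mem_mul ha (apply_mem_conjIdeal I ha))
        (Submodule.mul_mem_mul hb (apply_mem_conjIdeal I' hb))
    show (ω : fixedSubfield σ) ∈ B * B'
    convert hmem using 1
    apply Subtype.ext
    show (c : K) * σ c = a * σ a * (b * σ b)
    rw [show (c : K) = a * b from hab.symm, map_mul]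
    ring
  have hcτc : c * τ c ∈ m.map (algebraMap (orderPlus σ R) R) :=
    Ideal.mem_map_of_mem _ (h𝔡m hω)
  have hone : (1 : R) = c * τ c - (r + τ r + r * τ r) := by
    simp only [c, map_add, map_one]; ring
  refine map_algebraMap_orderPlus_ne_top hRfg hm.ne_top ((Ideal.eq_top_iff_one _).mpr ?_)
  rw [hone]
  exact Ideal.sub_mem _ hcτc (Ideal.add_mem _ (Ideal.add_mem _ hr (conjOrder_mem_map hRstable hr))
    (Ideal.mul_mem_right _ _ hr))

def normUnit (hσinv : ∀ x, σ (σ x) = x) (hRstable : ∀ x ∈ R, σ x ∈ R)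
    (hRfg : Module.Finite ℤ R) :
    (Submodule R K)ˣ →* (Submodule (orderPlus σ R) (fixedSubfield σ))ˣ where
  toFun I :=
    { val := restrictPlus σ R (normIdeal hσinv hRstable I)
      inv := restrictPlus σ R (normIdeal hσinv hRstable ↑I⁻¹)
      val_inv := restrictPlus_normIdeal_mul_eq_one hσinv hRstable hRfg I.mul_inv
      inv_val := restrictPlus_normIdeal_mul_eq_one hσinv hRstable hRfg I.inv_mul }
  map_one' := Units.ext (by simp [restrictPlus_one])
  map_mul' I J := by
    have hmul (I : (Submodule R K)ˣ) :
        normIdeal hσinv hRstable I * normIdeal hσinv hRstable ↑I⁻¹ = 1 := by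
      rw [← map_mul, I.mul_inv, map_one]
    ext1
    simp only [Units.val_mul, map_mul]
    exact restrictPlus_mul_of_mul_eq_one (hmul I) (hmul J)
      (restrictPlus_normIdeal_mul_eq_one hσinv hRstable hRfg I.mul_inv)
      (restrictPlus_normIdeal_mul_eq_one hσinv hRstable hRfg J.mul_inv)

theorem principalSubgroup_le_comap_normUnit [NumberField K] (hσinv : ∀ x, σ (σ x) = x)
    (hconj : ∀ (ψ : K →+* ℂ) (x : K), ψ (σ x) = starRingEnd ℂ (ψ x))
    (hRstable : ∀ x ∈ R, σ x ∈ R) (hRfg : Module.Finite ℤ R) :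
    principalSubgroup R ≤
      (narrowPrincipalSubgroup σ R).comap (normUnit hσinv hRstable hRfg) := by
  refine (Subgroup.closure_le _).mpr fun u ⟨x, hx, hu⟩ => Subgroup.subset_closure ?_
  refine ⟨_, pos_apply_mul_apply hσinv hconj hx, ?_⟩
  show restrictPlus σ R (u * conjIdeal σ R u) = _
  rw [hu, conjIdeal_span_singleton hRstable, Submodule.span_mul_span,
    Set.singleton_mul_singleton, restrictPlus_span_mul_apply hσinv hx]

end Norm

theorem stmt_12_general [NumberField K]
    (σ : K ≃ₐ[ℚ] K) (hσinv : ∀ x, σ (σ x) = x)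
    (hconj : ∀ (ψ : K →+* ℂ) (x : K), ψ (σ x) = starRingEnd ℂ (ψ x))
    (R : Subalgebra ℤ K) (hRfg : Module.Finite ℤ R)
    (hRstable : ∀ x ∈ R, σ x ∈ R) :
    ∃ N : (Submodule R K)ˣ ⧸ principalSubgroup R →*
        (Submodule (orderPlus σ R) ↥(fixedSubfield σ))ˣ ⧸ narrowPrincipalSubgroup σ R,
      ∀ I : (Submodule R K)ˣ,
        ∃ J : (Submodule (orderPlus σ R) ↥(fixedSubfield σ))ˣ,
          (J : Submodule (orderPlus σ R) ↥(fixedSubfield σ))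
              = restrictPlus σ R ((I : Submodule R K) * conjIdeal σ R I) ∧
            N (QuotientGroup.mk I) = QuotientGroup.mk J :=
  ⟨QuotientGroup.map _ _ (normUnit hσinv hRstable hRfg)
      (principalSubgroup_le_comap_normUnit hσinv hconj hRstable hRfg),
    fun I => ⟨normUnit hσinv hRstable hRfg I, rfl, QuotientGroup.map_mk _ _ _ _ I⟩⟩

/-- Let `K` be a CM number field of degree `2g` with complex
conjugation `σ` and maximal totally real subfield `K⁺`, let `R` be an order in `K`
stable under complex conjugation, and `R⁺ = R ∩ K⁺`.  Then the norm map `I ↦ I·Ī`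
induces a well-defined group homomorphism `N : Cl(R) → Cl⁺(R⁺)` from the class group
of `R` to the narrow class group of `R⁺`: there is a group homomorphism `N` sending
the class of each invertible fractional ideal `I` to the class of the invertible
`R⁺`-ideal `(I·Ī) ∩ K⁺`. -/
theorem stmt_12 [NumberField K] (g : ℕ) (hg : 0 < g)
    (hdeg : Module.finrank ℚ K = 2 * g)
    (σ : K ≃ₐ[ℚ] K) (hσinv : ∀ x, σ (σ x) = x) (hσne : σ ≠ (AlgEquiv.refl : K ≃ₐ[ℚ] K))
    (hconj : ∀ (ψ : K →+* ℂ) (x : K), ψ (σ x) = starRingEnd ℂ (ψ x))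
    (R : Subalgebra ℤ K) (hRfg : Module.Finite ℤ R)
    (hRfull : ∀ x : K, ∃ n : ℤ, n ≠ 0 ∧ (n : K) * x ∈ R)
    (hRstable : ∀ x ∈ R, σ x ∈ R) :
    ∃ N : (Submodule R K)ˣ ⧸ principalSubgroup R →*
        (Submodule (orderPlus σ R) ↥(fixedSubfield σ))ˣ ⧸ narrowPrincipalSubgroup σ R,
      ∀ I : (Submodule R K)ˣ,
        ∃ J : (Submodule (orderPlus σ R) ↥(fixedSubfield σ))ˣ,
          (J : Submodule (orderPlus σ R) ↥(fixedSubfield σ))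
              = restrictPlus σ R ((I : Submodule R K) * conjIdeal σ R I) ∧
            N (QuotientGroup.mk I) = QuotientGroup.mk J :=
  stmt_12_general σ hσinv hconj R hRfg hRstable
end
end
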